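/- Let p be a prime, α ∈ ℤ/pℤ \ {0,1}, G a group, X a conjugacy class of G generating G, and φ : ℤ/pℤ → X a bijection satisfying φ(i)φ(j)φ(i)⁻¹ = φ((1−α)i + αj) for all i, j ∈ ℤ/pℤ. Set g₀ = φ(0) and γ = φ(0)φ(1)⁻¹. Let k be a field of characteristic p, let J ⊆ kG be the two-sided ideal generated by γ − 1, let V be a Yetter–Drinfeld module over kG generated as a kG-module by a vector v₀ ∈ V_{g₀}, and let δ : V → kG ⊗ V be the k-linear coaction determined by δ(v) = x ⊗ v for v ∈ V_x. Denote by ᾱ ∈ k the image of α under ℤ/pℤ → k. Then for all 0 ≤ j ≤ p − 1, δ((γ − 1)^j v₀) − Σ_{i=0}^{j} C(j,i) (1 − ᾱ)^i (γ − 1)^i g₀ ⊗ (γ − 1)^{j−i} v₀ lies in Σ_{k+l ≥ j+1} J^k ⊗ (J^l V), where C(j,i) denotes the ordinary binomial coefficient. -/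

import Mathlib

/-!
Write `γ = φ 0 * (φ 1)⁻¹`, `c = γ - 1`, `g₀ = φ 0` and `q = 1 - α`. Because `δ` is compatible with
the grading, `δ (γ • v) = (γ · γ⁻¹ ⊗ γ •) (δ v)`, so `δ (c ^ j • v₀) = Φ ^ j (g₀ ⊗ v₀)` with
`Φ = (γ · γ⁻¹ ⊗ γ •) - 1`, and `Φ` raises the filtration `Σ_{a+b ≥ n} J^a ⊗ J^b V` by one.
One filtration step deeper, `Φ` sends `c^i g₀ ⊗ c^m v₀` to
`c^i g₀ ⊗ c^(m+1) v₀ + q c^(i+1) g₀ ⊗ c^m v₀`, and iterating gives the binomial expansion.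

The coefficient `q` comes from the rack: conjugation by `γ` shifts `φ` by `α - 1`, which generates
`ℤ/p`, so every `φ i * (φ (i+1))⁻¹` is congruent to `γ` modulo `J²`. Telescoping,
`γ g₀ γ⁻¹ g₀⁻¹ = φ (α - 1) * (φ 0)⁻¹ ≡ γ ^ (1 - α) ≡ 1 + q c` modulo `J²`.
-/

open TensorProduct

/-- The image `P ⊗ Q` of a tensor product of two submodules inside `M ⊗[k] N`. -/
noncomputable def subTensor13 {k : Type*} [CommSemiring k] {M N : Type*}
    [AddCommMonoid M] [Module k M] [AddCommMonoid N] [Module k N]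
    (P : Submodule k M) (Q : Submodule k N) : Submodule k (M ⊗[k] N) :=
  LinearMap.range (TensorProduct.map P.subtype Q.subtype)

/-- The subspace `N V` of a module `V` spanned by products `a • v` with `a` in a subspace `N`
of the acting algebra. -/
def subSMul13 {k : Type*} [CommSemiring k] {A : Type*} [Semiring A] [Algebra k A]
    {V : Type*} [AddCommMonoid V] [Module k V] [Module A V] [IsScalarTower k A V]
    (N : Submodule k A) : Submodule k V :=
  Submodule.span k {w : V | ∃ a ∈ N, ∃ v : V, w = a • v}


/-- Powers of an ideal, with the convention that the zeroth power is the whole algebra. -/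
def idealPow13 {k : Type*} [CommSemiring k] {A : Type*} [Semiring A] [Algebra k A]
    (J : Submodule k A) : ℕ → Submodule k A
  | 0 => ⊤
  | m + 1 => J ^ (m + 1)

open Finset

theorem pow_apply_sub_sum_choose_mem {R M : Type*} [Semiring R] [AddCommGroup M] [Module R M]
    (F : ℕ → Submodule R M) (Φ : Module.End R M) (hΦ : ∀ n, ∀ x ∈ F n, Φ x ∈ F (n + 1))
    (f : ℕ → ℕ → M) (hf : ∀ i m, Φ (f i m) - (f i (m + 1) + f (i + 1) m) ∈ F (i + m + 2))
    (j : ℕ) :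
    (Φ ^ j) (f 0 0) - ∑ i ∈ range (j + 1), j.choose i • f i (j - i) ∈ F (j + 1) := by
  induction j with
  | zero => simp
  | succ j ih =>
    have hsum : Φ (∑ i ∈ range (j + 1), j.choose i • f i (j - i)) -
        ∑ i ∈ range (j + 2), (j + 1).choose i • f i (j + 1 - i) ∈ F (j + 2) := by
      rw [sum_choose_succ_nsmul, map_sum, ← sum_add_distrib, ← sum_sub_distrib]
      refine sum_mem fun i hi => ?_
      have hij : i ≤ j := Nat.lt_succ_iff.mp (mem_range.mp hi)
      have := hf i (j - i)
      rw [show i + (j - i) + 2 = j + 2 by omega, show j - i + 1 = j + 1 - i by omega] at this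
      rw [map_nsmul, ← smul_add, ← smul_sub]
      exact Submodule.smul_of_tower_mem _ _ this
    rw [pow_succ', Module.End.mul_apply]
    convert add_mem (hΦ _ _ ih) hsum using 1
    rw [map_sub]
    abel

section IdealPow

variable {k A : Type*} [CommRing k] [Ring A] [Algebra k A]

def Submodule.IsTwoSidedIdeal (J : Submodule k A) : Prop :=
  ∀ x ∈ J, ∀ a : A, a * x ∈ J ∧ x * a ∈ J

theorem Submodule.IsTwoSidedIdeal.mul_sub_mul_mem {I : Submodule k A} (hI : I.IsTwoSidedIdeal)
    {x y X Y : A} (hx : x - X ∈ I) (hy : y - Y ∈ I) : x * y - X * Y ∈ I := by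
  rw [show x * y - X * Y = (x - X) * y + X * (y - Y) by noncomm_ring]
  exact add_mem (hI _ hx y).2 (hI _ hy X).1

variable {J : Submodule k A}

theorem mem_idealPow13_one {x : A} : x ∈ idealPow13 J 1 ↔ x ∈ J := by
  rw [idealPow13, pow_one]

theorem idealPow13_mul_le (hJ : J.IsTwoSidedIdeal) (m n : ℕ) :
    idealPow13 J m * idealPow13 J n ≤ idealPow13 J (m + n) := by
  have hl : ⊤ * J ≤ J := Submodule.mul_le.2 fun a _ x hx => (hJ x hx a).1
  have hr : J * ⊤ ≤ J := Submodule.mul_le.2 fun x hx a _ => (hJ x hx a).2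
  match m, n with
  | 0, 0 => exact le_top
  | 0, n + 1 =>
    calc ⊤ * J ^ (n + 1) = ⊤ * J * J ^ n := by rw [pow_succ', mul_assoc]
      _ ≤ J * J ^ n := mul_le_mul_left hl _
      _ = idealPow13 J (0 + (n + 1)) := by rw [zero_add, idealPow13, pow_succ']
  | m + 1, 0 =>
    calc J ^ (m + 1) * ⊤ = J ^ m * (J * ⊤) := by rw [pow_succ, mul_assoc]
      _ ≤ J ^ m * J := mul_le_mul_right hr _
      _ = idealPow13 J (m + 1 + 0) := by rw [add_zero, idealPow13, pow_succ]
  | m + 1, n + 1 => exact (pow_add J (m + 1) (n + 1)).ge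

theorem mul_mem_idealPow13 (hJ : J.IsTwoSidedIdeal) {m n : ℕ} {x y : A}
    (hx : x ∈ idealPow13 J m) (hy : y ∈ idealPow13 J n) : x * y ∈ idealPow13 J (m + n) :=
  idealPow13_mul_le hJ m n (Submodule.mul_mem_mul hx hy)

theorem isTwoSidedIdeal_idealPow13 (hJ : J.IsTwoSidedIdeal) (n : ℕ) :
    (idealPow13 J n).IsTwoSidedIdeal := fun x hx a =>
  ⟨by simpa using mul_mem_idealPow13 hJ (m := 0) Submodule.mem_top hx,
    mul_mem_idealPow13 hJ (n := 0) hx Submodule.mem_top⟩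

theorem pow_mem_idealPow13 (hJ : J.IsTwoSidedIdeal) {c : A} (hc : c ∈ J) (n : ℕ) :
    c ^ n ∈ idealPow13 J n := by
  induction n with
  | zero => exact Submodule.mem_top
  | succ n ih => exact pow_succ c n ▸ mul_mem_idealPow13 hJ ih (mem_idealPow13_one.2 hc)

end IdealPow

noncomputable def tensorFiltration {k A : Type*} [CommRing k] [Ring A] [Algebra k A]
    (J : Submodule k A) (V : Type*) [AddCommGroup V] [Module k V] [Module A V]
    [IsScalarTower k A V] (n : ℕ) : Submodule k (A ⊗[k] V) :=
  ⨆ (kl : ℕ × ℕ) (_ : n ≤ kl.1 + kl.2),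
    subTensor13 (idealPow13 J kl.1) (subSMul13 (V := V) (idealPow13 J kl.2))

section Filtration

variable {k A V : Type*} [CommRing k] [Ring A] [Algebra k A]
  [AddCommGroup V] [Module k V] [Module A V] [IsScalarTower k A V]

theorem smul_mem_subSMul13 {N : Submodule k A} {a : A} (ha : a ∈ N) (v : V) :
    a • v ∈ subSMul13 (V := V) N :=
  Submodule.subset_span ⟨a, ha, v, rfl⟩

theorem smul_mem_subSMul13_of_mul_mem {N N' : Submodule k A} {b : A}
    (h : ∀ a ∈ N, b * a ∈ N') {w : V} (hw : w ∈ subSMul13 (V := V) N) :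
    b • w ∈ subSMul13 (V := V) N' := by
  have : subSMul13 (V := V) N ≤ (subSMul13 N').comap (DistribSMul.toLinearMap k V b) :=
    Submodule.span_le.2 <| by
      rintro _ ⟨a, ha, v, rfl⟩
      simpa [← mul_smul] using smul_mem_subSMul13 (h a ha) v
  exact this hw

variable {J : Submodule k A}

theorem tensorFiltration_le_iff {n : ℕ} {P : Submodule k (A ⊗[k] V)} :
    tensorFiltration J V n ≤ P ↔ ∀ a b, n ≤ a + b → ∀ x ∈ idealPow13 J a,
      ∀ w ∈ subSMul13 (V := V) (idealPow13 J b), x ⊗ₜ[k] w ∈ P := by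
  simp only [tensorFiltration, iSup_le_iff, Prod.forall, subTensor13, range_map,
    Submodule.range_subtype, Submodule.map₂_le, mk_apply]

theorem tmul_mem_tensorFiltration {n a b : ℕ} (h : n ≤ a + b) {x : A}
    (hx : x ∈ idealPow13 J a) {w : V} (hw : w ∈ subSMul13 (V := V) (idealPow13 J b)) :
    x ⊗ₜ[k] w ∈ tensorFiltration J V n :=
  tensorFiltration_le_iff.1 le_rfl a b h x hx w hw

end Filtration

section ConjTensor

variable {k A V : Type*} [CommRing k] [Ring A] [Algebra k A]
  [AddCommGroup V] [Module k V] [Module A V] [IsScalarTower k A V]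

noncomputable def conjTensor (u : Aˣ) : Module.End k (A ⊗[k] V) :=
  TensorProduct.map (LinearMap.mulLeft k (u : A) ∘ₗ LinearMap.mulRight k (↑u⁻¹ : A))
    (DistribSMul.toLinearMap k V (u : A))

@[simp]
theorem conjTensor_tmul (u : Aˣ) (a : A) (w : V) :
    conjTensor u (a ⊗ₜ[k] w) = (↑u * a * ↑u⁻¹) ⊗ₜ[k] ((u : A) • w) := by
  simp [conjTensor, mul_assoc]

variable {J : Submodule k A}

theorem conjTensor_sub_one_mem_tensorFiltration (hJ : J.IsTwoSidedIdeal) {u : Aˣ}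
    (hu : (u : A) - 1 ∈ J) {n : ℕ} {z : A ⊗[k] V} (hz : z ∈ tensorFiltration J V n) :
    (conjTensor u - 1) z ∈ tensorFiltration J V (n + 1) := by
  suffices tensorFiltration J V n ≤ (tensorFiltration J V (n + 1)).comap (conjTensor u - 1) from
    this hz
  refine tensorFiltration_le_iff.2 fun a b hab x hx w hw => ?_
  have hu1 : (u : A) - 1 ∈ idealPow13 J 1 := mem_idealPow13_one.2 hu
  -- `u x u⁻¹ ⊗ u w - x ⊗ w`, split so that each summand gains one power of `J`
  have hsplit : (conjTensor u - 1) (x ⊗ₜ[k] w) =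
      (((↑u - 1) * x - x * (↑u - 1)) * ↑u⁻¹) ⊗ₜ[k] ((u : A) • w) + x ⊗ₜ[k] (((u : A) - 1) • w) := by
    have hcomm : ((↑u - 1) * x - x * (↑u - 1)) * ↑u⁻¹ = ↑u * x * ↑u⁻¹ - x := by
      rw [show (↑u - 1) * x - x * (↑u - 1) = ↑u * x - x * ↑u by noncomm_ring, sub_mul,
        mul_assoc x, Units.mul_inv, mul_one]
    rw [hcomm, LinearMap.sub_apply, conjTensor_tmul, Module.End.one_apply, sub_tmul, sub_smul,
      one_smul, tmul_sub]
    abel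
  rw [Submodule.mem_comap, hsplit]
  refine add_mem (tmul_mem_tensorFiltration (a := a + 1) (b := b) (by omega) ?_ ?_)
    (tmul_mem_tensorFiltration (a := a) (b := b + 1) (by omega) hx ?_)
  · refine mul_mem_idealPow13 hJ (n := 0) (sub_mem ?_ (mul_mem_idealPow13 hJ hx hu1))
      Submodule.mem_top
    exact add_comm a 1 ▸ mul_mem_idealPow13 hJ hu1 hx
  · exact smul_mem_subSMul13_of_mul_mem (fun y hy => (isTwoSidedIdeal_idealPow13 hJ b y hy _).1) hw
  · exact smul_mem_subSMul13_of_mul_mem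
      (fun y hy => add_comm b 1 ▸ mul_mem_idealPow13 hJ hu1 hy) hw

end ConjTensor

section Coaction

variable {k A V : Type*} [CommRing k] [Ring A] [Algebra k A]
  [AddCommGroup V] [Module k V] [Module A V] [IsScalarTower k A V] {J : Submodule k A}

theorem conjTensor_sub_one_tmul_sub_mem (hJ : J.IsTwoSidedIdeal) {u : Aˣ}
    (hu : (u : A) - 1 ∈ J) {g : A} {q : k}
    (hg : ↑u * g * ↑u⁻¹ - g - q • (((u : A) - 1) * g) ∈ idealPow13 J 2) (v : V) (i m : ℕ) :
    (conjTensor u - 1) ((((u : A) - 1) ^ i * g) ⊗ₜ[k] (((u : A) - 1) ^ m • v)) -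
      ((((u : A) - 1) ^ i * g) ⊗ₜ[k] (((u : A) - 1) ^ (m + 1) • v) +
        q • ((((u : A) - 1) ^ (i + 1) * g) ⊗ₜ[k] (((u : A) - 1) ^ m • v)))
      ∈ tensorFiltration J V (i + m + 2) := by
  set c := (u : A) - 1 with hc
  set r := ↑u * g * ↑u⁻¹ - g - q • (c * g) with hr
  have hcpow (n : ℕ) : c ^ n ∈ idealPow13 J n := pow_mem_idealPow13 hJ hu n
  have hconj : ↑u * (c ^ i * g) * ↑u⁻¹ = c ^ i * g + q • (c ^ (i + 1) * g) + c ^ i * r := by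
    have hcomm : (u : A) * c ^ i = c ^ i * u :=
      (((Commute.refl (u : A)).sub_right (Commute.one_right _)).pow_right i).eq
    calc ↑u * (c ^ i * g) * ↑u⁻¹ = c ^ i * (↑u * g * ↑u⁻¹) := by
          rw [← mul_assoc, hcomm, mul_assoc, mul_assoc, mul_assoc]
      _ = _ := by
        simp only [hr, mul_sub, mul_smul_comm, pow_succ, mul_assoc]
        abel
  have hsmul : (u : A) • c ^ m • v = c ^ m • v + c ^ (m + 1) • v := by
    rw [show (u : A) = 1 + c by rw [hc]; abel, add_smul, one_smul, pow_succ', mul_smul]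
  have hsplit : (conjTensor u - 1) ((c ^ i * g) ⊗ₜ[k] (c ^ m • v)) -
      ((c ^ i * g) ⊗ₜ[k] (c ^ (m + 1) • v) + q • ((c ^ (i + 1) * g) ⊗ₜ[k] (c ^ m • v))) =
      q • ((c ^ (i + 1) * g) ⊗ₜ[k] (c ^ (m + 1) • v)) +
        (c ^ i * r) ⊗ₜ[k] ((u : A) • c ^ m • v) := by
    rw [LinearMap.sub_apply, conjTensor_tmul, Module.End.one_apply, hconj, hsmul]
    simp only [add_tmul, tmul_add, ← smul_tmul']
    abel
  rw [hsplit]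
  refine add_mem (Submodule.smul_mem _ q ?_) ?_
  · exact tmul_mem_tensorFiltration (by omega)
      (mul_mem_idealPow13 hJ (n := 0) (hcpow (i + 1)) Submodule.mem_top)
      (smul_mem_subSMul13 (hcpow (m + 1)) v)
  · rw [← mul_smul]
    exact tmul_mem_tensorFiltration (a := i + 2) (b := m) (by omega)
      (mul_mem_idealPow13 hJ (hcpow i) hg)
      (smul_mem_subSMul13 ((isTwoSidedIdeal_idealPow13 hJ m _ (hcpow m) _).1) v)

theorem coaction_pow_smul_sub_sum_mem_tensorFiltration (hJ : J.IsTwoSidedIdeal)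
    (δ : V →ₗ[k] A ⊗[k] V) {u : Aˣ} (hu : (u : A) - 1 ∈ J)
    (hδu : ∀ v, δ ((u : A) • v) = conjTensor u (δ v)) {g : A} {q : k}
    (hg : ↑u * g * ↑u⁻¹ - g - q • (((u : A) - 1) * g) ∈ idealPow13 J 2)
    {v₀ : V} (hv₀ : δ v₀ = g ⊗ₜ[k] v₀) (j : ℕ) :
    δ (((u : A) - 1) ^ j • v₀) - ∑ i ∈ range (j + 1), ((j.choose i : k) * q ^ i) •
        ((((u : A) - 1) ^ i * g) ⊗ₜ[k] (((u : A) - 1) ^ (j - i) • v₀))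
      ∈ tensorFiltration J V (j + 1) := by
  set c := (u : A) - 1 with hc
  have hδpow (n : ℕ) (v : V) : δ (c ^ n • v) = ((conjTensor u - 1) ^ n) (δ v) := by
    induction n generalizing v with
    | zero => simp
    | succ n ih =>
      rw [pow_succ, mul_smul, ih, pow_succ, Module.End.mul_apply, hc, sub_smul, one_smul,
        map_sub, hδu]
      rfl
  have key := pow_apply_sub_sum_choose_mem (tensorFiltration J V) (conjTensor u - 1)
    (fun _ _ hx => conjTensor_sub_one_mem_tensorFiltration hJ hu hx)
    (fun i m => q ^ i • ((c ^ i * g) ⊗ₜ[k] (c ^ m • v₀)))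
    (fun i m => by
      simpa [smul_sub, smul_add, smul_smul, pow_succ] using
        Submodule.smul_mem _ (q ^ i) (conjTensor_sub_one_tmul_sub_mem hJ hu hg v₀ i m)) j
  simpa [hδpow, hv₀, mul_smul, Nat.cast_smul_eq_nsmul] using key

end Coaction

theorem rack_conj_shift {G F : Type*} [Group G] [Field F] {α : F} {φ : F → G} (hα0 : α ≠ 0)
    (hrack : ∀ i j : F, φ i * φ j * (φ i)⁻¹ = φ ((1 - α) * i + α * j)) (i : F) :
    φ 0 * (φ 1)⁻¹ * φ i * (φ 0 * (φ 1)⁻¹)⁻¹ = φ (i + (α - 1)) := by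
  obtain ⟨j, hj⟩ : ∃ j, α * j = i - (1 - α) := ⟨α⁻¹ * (i - (1 - α)), mul_inv_cancel_left₀ hα0 _⟩
  have h1 : φ 1 * φ j * (φ 1)⁻¹ = φ i := by
    rw [hrack]
    congr 1
    linear_combination hj
  have h0 : φ 0 * φ j * (φ 0)⁻¹ = φ (i + (α - 1)) := by
    rw [hrack]
    congr 1
    linear_combination hj
  rw [← h0, ← h1]
  group

theorem ZMod.induction_add_of_ne_zero {p : ℕ} [Fact p.Prime] {a : ZMod p} (ha : a ≠ 0)
    {P : ZMod p → Prop} (h0 : P 0) (hadd : ∀ i, P i → P (i + a)) (i : ZMod p) : P i := by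
  have hmul (n : ℕ) : P (n * a) := by
    induction n with
    | zero => simpa using h0
    | succ n ih => simpa [add_mul] using hadd _ ih
  simpa [mul_assoc, inv_mul_cancel₀ ha] using hmul (i * a⁻¹).val

section RackModSquare

variable {k A G : Type*} [CommRing k] [Ring A] [Algebra k A] [Group G] {I : Submodule k A}
  {p : ℕ} [Fact p.Prime] {α : ZMod p} {φ : ZMod p → G}

theorem map_mul_inv_add_one_sub_mem (hI : I.IsTwoSidedIdeal) (ρ : G →* A) (hα0 : α ≠ 0)
    (hα1 : α ≠ 1) (hrack : ∀ i j, φ i * φ j * (φ i)⁻¹ = φ ((1 - α) * i + α * j)) (i : ZMod p) :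
    ρ (φ i * (φ (i + 1))⁻¹) - ρ (φ 0 * (φ 1)⁻¹) ∈ I := by
  set γ := φ 0 * (φ 1)⁻¹ with hγ
  refine ZMod.induction_add_of_ne_zero (P := fun i => ρ (φ i * (φ (i + 1))⁻¹) - ρ γ ∈ I)
    (sub_ne_zero.2 hα1) (by simp [γ]) (fun i hi => ?_) i
  have hconj : φ (i + (α - 1)) * (φ (i + (α - 1) + 1))⁻¹ = γ * (φ i * (φ (i + 1))⁻¹) * γ⁻¹ := by
    rw [← rack_conj_shift hα0 hrack i, show i + (α - 1) + 1 = i + 1 + (α - 1) by ring,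
      ← rack_conj_shift hα0 hrack (i + 1), ← hγ]
    group
  have h := hI.mul_sub_mul_mem (hI.mul_sub_mul_mem (by simp : ρ γ - ρ γ ∈ I) hi)
    (by simp : ρ γ⁻¹ - ρ γ⁻¹ ∈ I)
  simpa only [← map_mul, mul_inv_cancel_right, hconj] using h

theorem map_mul_inv_add_sub_mem (hI : I.IsTwoSidedIdeal) (ρ : G →* A) (hα0 : α ≠ 0)
    (hα1 : α ≠ 1) (hrack : ∀ i j, φ i * φ j * (φ i)⁻¹ = φ ((1 - α) * i + α * j))
    (hsq : (ρ (φ 0 * (φ 1)⁻¹) - 1) * (ρ (φ 0 * (φ 1)⁻¹) - 1) ∈ I) (n : ℕ) (i : ZMod p) :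
    ρ (φ i * (φ (i + n))⁻¹) - (1 + n • (ρ (φ 0 * (φ 1)⁻¹) - 1)) ∈ I := by
  induction n with
  | zero => simp
  | succ n ih =>
    set c := ρ (φ 0 * (φ 1)⁻¹) - 1
    have hstep := hI.mul_sub_mul_mem ih (map_mul_inv_add_one_sub_mem hI ρ hα0 hα1 hrack (i + n))
    have hprod : φ i * (φ (i + ↑(n + 1)))⁻¹ =
        φ i * (φ (i + n))⁻¹ * (φ (i + n) * (φ (i + n + 1))⁻¹) := by
      rw [Nat.cast_succ, ← add_assoc]
      group
    rw [hprod, map_mul]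
    convert add_mem hstep (Submodule.smul_of_tower_mem I n hsq) using 1
    simp only [c, succ_nsmul, add_mul, sub_mul, mul_sub, one_mul, mul_one, smul_mul_assoc,
      smul_sub]
    abel

end RackModSquare

theorem conj_map_sub_sub_smul_mem {k A G : Type*} [CommRing k] [Ring A] [Algebra k A] [Group G]
    {I : Submodule k A} {p : ℕ} [Fact p.Prime] [CharP k p] {α : ZMod p} {φ : ZMod p → G}
    (hI : I.IsTwoSidedIdeal) (ρ : G →* A) (hα0 : α ≠ 0) (hα1 : α ≠ 1)
    (hrack : ∀ i j, φ i * φ j * (φ i)⁻¹ = φ ((1 - α) * i + α * j))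
    (hsq : (ρ (φ 0 * (φ 1)⁻¹) - 1) * (ρ (φ 0 * (φ 1)⁻¹) - 1) ∈ I) :
    ρ (φ 0 * (φ 1)⁻¹) * ρ (φ 0) * ρ (φ 0 * (φ 1)⁻¹)⁻¹ - ρ (φ 0) -
      (1 - ZMod.castHom (dvd_refl p) k α) • ((ρ (φ 0 * (φ 1)⁻¹) - 1) * ρ (φ 0)) ∈ I := by
  -- `φ (α - 1) * (φ 0)⁻¹` telescopes over `(1 - α).val` steps of the shift `i ↦ i + 1`
  have h := hI.mul_sub_mul_mem
    (map_mul_inv_add_sub_mem hI ρ hα0 hα1 hrack hsq (1 - α).val (α - 1))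
    (by simp : ρ (φ 0) - ρ (φ 0) ∈ I)
  have hq : ((1 - α).val : k) = 1 - ZMod.castHom (dvd_refl p) k α := by
    rw [← map_natCast (ZMod.castHom (dvd_refl p) k), ZMod.natCast_zmod_val, map_sub, map_one]
  rw [ZMod.natCast_zmod_val, show α - 1 + (1 - α) = 0 by ring, ← map_mul, inv_mul_cancel_right,
    ← zero_add (α - 1), ← rack_conj_shift hα0 hrack, add_mul, one_mul, smul_mul_assoc,
    ← Nat.cast_smul_eq_nsmul k, hq, ← sub_sub] at h
  simpa only [map_mul, map_inv] using h

theorem coaction_of_smul {k G V : Type*} [CommRing k] [Group G] [AddCommGroup V] [Module k V]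
    [Module (MonoidAlgebra k G) V] [IsScalarTower k (MonoidAlgebra k G) V]
    {Vx : G → Submodule k V} (hspan : iSup Vx = ⊤)
    (hcompat : ∀ g x : G, ∀ v ∈ Vx x, MonoidAlgebra.of k G g • v ∈ Vx (g * x * g⁻¹))
    {δ : V →ₗ[k] MonoidAlgebra k G ⊗[k] V}
    (hδ : ∀ x : G, ∀ v ∈ Vx x, δ v = MonoidAlgebra.of k G x ⊗ₜ[k] v) (g : G) (v : V) :
    δ (MonoidAlgebra.of k G g • v) = conjTensor ((MonoidAlgebra.of k G).toHomUnits g) (δ v) := by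
  refine Submodule.iSup_induction Vx
    (motive := fun v => δ (MonoidAlgebra.of k G g • v) = conjTensor _ (δ v))
    (hspan ▸ Submodule.mem_top : v ∈ iSup Vx)
    (fun x w hw => ?_) (by simp) (fun v w hv hw => by simp only [smul_add, map_add, hv, hw])
  rw [hδ _ _ (hcompat g x w hw), hδ x w hw, conjTensor_tmul, ← map_inv,
    MonoidHom.coe_toHomUnits, MonoidHom.coe_toHomUnits, map_mul, map_mul]

theorem stmt13_general {k : Type*} [Field k] {G : Type*} [Group G] [DecidableEq G]
    (p : ℕ) (hp : p.Prime) [CharP k p]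
    (α : ZMod p) (hα0 : α ≠ 0) (hα1 : α ≠ 1)
    (φ : ZMod p → G)
    (hrack : ∀ i j : ZMod p, φ i * φ j * (φ i)⁻¹ = φ ((1 - α) * i + α * j))
    -- J is the two-sided ideal of kG generated by γ - 1
    (J : Submodule k (MonoidAlgebra k G))
    (hJmem : MonoidAlgebra.of k G (φ 0 * (φ 1)⁻¹) - 1 ∈ J)
    (hJ2 : ∀ x ∈ J, ∀ a : MonoidAlgebra k G, a * x ∈ J ∧ x * a ∈ J)
    -- V is a Yetter--Drinfeld module over kG, generated as a kG-module by v₀ ∈ V_{g₀}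
    {V : Type*} [AddCommGroup V] [Module k V] [Module (MonoidAlgebra k G) V]
    [IsScalarTower k (MonoidAlgebra k G) V]
    (Vx : G → Submodule k V)
    (hgrad : DirectSum.IsInternal Vx)
    (hcompat : ∀ g x : G, ∀ v ∈ Vx x, MonoidAlgebra.of k G g • v ∈ Vx (g * x * g⁻¹))
    (v₀ : V) (hv₀ : v₀ ∈ Vx (φ 0))
    -- the coaction δ, determined by δ(v) = x ⊗ v for v ∈ V_x
    (δ : V →ₗ[k] MonoidAlgebra k G ⊗[k] V)
    (hδ : ∀ x : G, ∀ v ∈ Vx x, δ v = MonoidAlgebra.of k G x ⊗ₜ[k] v) :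
    ∀ j : ℕ, j ≤ p - 1 →
      δ ((MonoidAlgebra.of k G (φ 0 * (φ 1)⁻¹) - 1) ^ j • v₀) -
        ∑ i ∈ Finset.range (j + 1),
          ((j.choose i : k) * (1 - ZMod.castHom (dvd_refl p) k α) ^ i) •
            (((MonoidAlgebra.of k G (φ 0 * (φ 1)⁻¹) - 1) ^ i * MonoidAlgebra.of k G (φ 0))
              ⊗ₜ[k] ((MonoidAlgebra.of k G (φ 0 * (φ 1)⁻¹) - 1) ^ (j - i) • v₀))
      ∈ ⨆ (kl : ℕ × ℕ) (_ : j + 1 ≤ kl.1 + kl.2),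
          subTensor13 (idealPow13 J kl.1) (subSMul13 (V := V) (idealPow13 J kl.2)) := by
  have : Fact p.Prime := ⟨hp⟩
  intro j _
  have hsq : (MonoidAlgebra.of k G (φ 0 * (φ 1)⁻¹) - 1) * (MonoidAlgebra.of k G (φ 0 * (φ 1)⁻¹) - 1)
      ∈ idealPow13 J 2 := by
    simpa [sq] using pow_mem_idealPow13 hJ2 hJmem 2
  exact coaction_pow_smul_sub_sum_mem_tensorFiltration hJ2 δ
    (u := (MonoidAlgebra.of k G).toHomUnits (φ 0 * (φ 1)⁻¹)) hJmem
    (coaction_of_smul hgrad.submodule_iSup_eq_top hcompat hδ _)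
    (conj_map_sub_sub_smul_mem (isTwoSidedIdeal_idealPow13 hJ2 2) _ hα0 hα1 hrack hsq)
    (hδ _ _ hv₀) j

/-- In the situation of Statement 12, let `V` be a Yetter–Drinfeld module over
`kG` generated as a `kG`-module by `v₀ ∈ V_{g₀}`, with coaction `δ(v) = x ⊗ v` for `v ∈ V_x`.
Then for `0 ≤ j ≤ p − 1`,
`δ((γ−1)^j v₀) − Σ_{i=0}^{j} C(j,i) (1−ᾱ)^i (γ−1)^i g₀ ⊗ (γ−1)^{j−i} v₀`
lies in `Σ_{k+l ≥ j+1} J^k ⊗ (J^l V)`. -/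
theorem stmt13 {k : Type*} [Field k] {G : Type*} [Group G] [DecidableEq G]
    (p : ℕ) (hp : p.Prime) [CharP k p]
    (α : ZMod p) (hα0 : α ≠ 0) (hα1 : α ≠ 1)
    (φ : ZMod p → G) (hφinj : Function.Injective φ)
    (hXconj : ∃ x : G, Set.range φ = {y | IsConj x y})
    (hXgen : Subgroup.closure (Set.range φ) = ⊤)
    (hrack : ∀ i j : ZMod p, φ i * φ j * (φ i)⁻¹ = φ ((1 - α) * i + α * j))
    -- J is the two-sided ideal of kG generated by γ - 1
    (J : Submodule k (MonoidAlgebra k G))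
    (hJmem : MonoidAlgebra.of k G (φ 0 * (φ 1)⁻¹) - 1 ∈ J)
    (hJ2 : ∀ x ∈ J, ∀ a : MonoidAlgebra k G, a * x ∈ J ∧ x * a ∈ J)
    (hJmin : ∀ I : Submodule k (MonoidAlgebra k G),
      MonoidAlgebra.of k G (φ 0 * (φ 1)⁻¹) - 1 ∈ I →
      (∀ x ∈ I, ∀ a : MonoidAlgebra k G, a * x ∈ I ∧ x * a ∈ I) → J ≤ I)
    -- V is a Yetter--Drinfeld module over kG, generated as a kG-module by v₀ ∈ V_{g₀}
    {V : Type*} [AddCommGroup V] [Module k V] [Module (MonoidAlgebra k G) V]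
    [IsScalarTower k (MonoidAlgebra k G) V]
    (Vx : G → Submodule k V)
    (hgrad : DirectSum.IsInternal Vx)
    (hcompat : ∀ g x : G, ∀ v ∈ Vx x, MonoidAlgebra.of k G g • v ∈ Vx (g * x * g⁻¹))
    (v₀ : V) (hv₀ : v₀ ∈ Vx (φ 0))
    (hcyc : Submodule.span (MonoidAlgebra k G) {v₀} = ⊤)
    -- the coaction δ, determined by δ(v) = x ⊗ v for v ∈ V_x
    (δ : V →ₗ[k] MonoidAlgebra k G ⊗[k] V)
    (hδ : ∀ x : G, ∀ v ∈ Vx x, δ v = MonoidAlgebra.of k G x ⊗ₜ[k] v) :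
    ∀ j : ℕ, j ≤ p - 1 →
      δ ((MonoidAlgebra.of k G (φ 0 * (φ 1)⁻¹) - 1) ^ j • v₀) -
        ∑ i ∈ Finset.range (j + 1),
          ((j.choose i : k) * (1 - ZMod.castHom (dvd_refl p) k α) ^ i) •
            (((MonoidAlgebra.of k G (φ 0 * (φ 1)⁻¹) - 1) ^ i * MonoidAlgebra.of k G (φ 0))
              ⊗ₜ[k] ((MonoidAlgebra.of k G (φ 0 * (φ 1)⁻¹) - 1) ^ (j - i) • v₀))
      ∈ ⨆ (kl : ℕ × ℕ) (_ : j + 1 ≤ kl.1 + kl.2),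
          subTensor13 (idealPow13 J kl.1) (subSMul13 (V := V) (idealPow13 J kl.2)) :=
  stmt13_general p hp α hα0 hα1 φ hrack J hJmem hJ2 Vx hgrad hcompat v₀ hv₀ δ hδ
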